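/- M-polynomials drop below the lcm term: let R be a commutative ring, σ a finite type, and m a monomial order on σ →₀ ℕ. Let p₁, …, p_j be nonzero polynomials in MvPolynomial σ R, let t : σ →₀ ℕ satisfy m.degree p_i ≤ t pointwise for all i, and let a₁, …, a_j ∈ R satisfy Σ_i a_i · (m.leadCoeff p_i) = 0. Then the M-polynomial q = Σ_i a_i • X^(t − m.degree p_i) * p_i satisfies q = 0 or m.toSyn (m.degree q) < m.toSyn t. -/

import Mathlib

/-!
Each summand `a i • X^(t - deg p i) * p i` has head term at most `t`, and its coefficient at `t`
is `a i * lc (p i)`. Hence the whole sum has head term at most `t`, and its coefficient at `t` is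
the syzygy `∑ a i * lc (p i) = 0`, so `t` is not its head term.
-/

open MvPolynomial

/-- Head term of a polynomial with respect to a monomial order. -/
noncomputable def MonomialOrder.degree' {σ R : Type*} [CommSemiring R] (m : MonomialOrder σ)
    (p : MvPolynomial σ R) : σ →₀ ℕ :=
  m.toSyn.symm (p.support.sup fun s => m.toSyn s)

/-- Head coefficient of a polynomial with respect to a monomial order. -/
noncomputable def MonomialOrder.leadCoeff' {σ R : Type*} [CommSemiring R] (m : MonomialOrder σ)
    (p : MvPolynomial σ R) : R :=
  p.coeff (m.degree' p)

namespace MonomialOrder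

variable {σ R : Type*} [CommSemiring R] (m : MonomialOrder σ)

theorem degree'_eq_degree (p : MvPolynomial σ R) : m.degree' p = m.degree p := rfl

theorem leadCoeff'_eq_leadingCoeff (p : MvPolynomial σ R) :
    m.leadCoeff' p = m.leadingCoeff p := rfl

variable {m}

theorem eq_zero_or_degree_lt_of_coeff_eq_zero {q : MvPolynomial σ R} {t : σ →₀ ℕ}
    (hle : m.degree q ≼[m] t) (hcoeff : q.coeff t = 0) : q = 0 ∨ m.degree q ≺[m] t := by
  refine or_iff_not_imp_left.mpr fun hq => hle.lt_of_ne fun hdeg => ?_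
  have hdeg : m.degree q = t := m.toSyn.injective hdeg
  exact m.coeff_degree_ne_zero_iff.mpr hq (hdeg ▸ hcoeff)

theorem degree_monomial_mul_le (s : σ →₀ ℕ) (c : R) (p : MvPolynomial σ R) :
    m.degree (monomial s c * p) ≼[m] s + m.degree p := by
  refine m.degree_mul_le.trans ?_
  rw [map_add, map_add]
  exact add_le_add_left (m.degree_monomial_le c) _

section LiftToCommonMultiple

variable {p : MvPolynomial σ R} {t : σ →₀ ℕ} (ht : m.degree p ≤ t) (c : R)
include ht

theorem degree_monomial_tsub_degree_mul_le :
    m.degree (monomial (t - m.degree p) c * p) ≼[m] t := by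
  simpa only [tsub_add_cancel_of_le ht] using degree_monomial_mul_le (m := m) (t - m.degree p) c p

theorem coeff_monomial_tsub_degree_mul :
    (monomial (t - m.degree p) c * p).coeff t = c * m.leadingCoeff p := by
  have h := coeff_monomial_mul (m.degree p) (t - m.degree p) c p
  rwa [tsub_add_cancel_of_le ht] at h

end LiftToCommonMultiple

end MonomialOrder

open MonomialOrder in
theorem mPolynomial_degree_lt_general {σ R ι : Type*} [CommRing R]
    (m : MonomialOrder σ) (F : Finset ι) (p : ι → MvPolynomial σ R)
    (t : σ →₀ ℕ) (ht : ∀ i ∈ F, m.degree' (p i) ≤ t)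
    (a : ι → R) (ha : ∑ i ∈ F, a i * m.leadCoeff' (p i) = 0) :
    (∑ i ∈ F, a i • (monomial (t - m.degree' (p i)) 1 : MvPolynomial σ R) * p i) = 0 ∨
      m.toSyn (m.degree'
        (∑ i ∈ F, a i • (monomial (t - m.degree' (p i)) 1 : MvPolynomial σ R) * p i)) <
        m.toSyn t := by
  simp only [degree'_eq_degree, leadCoeff'_eq_leadingCoeff, smul_monomial, smul_eq_mul,
    mul_one] at ht ha ⊢
  refine eq_zero_or_degree_lt_of_coeff_eq_zero ?_ ?_
  · exact m.degree_sum_le.trans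
      (Finset.sup_le fun i hi => degree_monomial_tsub_degree_mul_le (ht i hi) (a i))
  · rw [coeff_sum, ← ha]
    exact Finset.sum_congr rfl fun i hi => coeff_monomial_tsub_degree_mul (ht i hi) (a i)

/-- The head term of an M-polynomial is strictly below the common multiple t of the head
terms used to form it. -/
theorem mPolynomial_degree_lt {σ R ι : Type*} [CommRing R] [Finite σ]
    (m : MonomialOrder σ) (F : Finset ι) (p : ι → MvPolynomial σ R)
    (hp : ∀ i ∈ F, p i ≠ 0) (t : σ →₀ ℕ) (ht : ∀ i ∈ F, m.degree' (p i) ≤ t)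
    (a : ι → R) (ha : ∑ i ∈ F, a i * m.leadCoeff' (p i) = 0) :
    (∑ i ∈ F, a i • (monomial (t - m.degree' (p i)) 1 : MvPolynomial σ R) * p i) = 0 ∨
      m.toSyn (m.degree'
        (∑ i ∈ F, a i • (monomial (t - m.degree' (p i)) 1 : MvPolynomial σ R) * p i)) <
        m.toSyn t :=
  mPolynomial_degree_lt_general m F p t ht a ha
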